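/- Let K be a field of characteristic p > 0, let r ∈ K be a primitive n-th root of unity with r ≠ 1, let α = 2r, β = −r², γ ∈ K, and let A = A(α, β, γ). Set z = du − r·ud + γ/(r−1). Then the elements d^{np}, u^{np}, and zⁿ are central in A, and A is a finitely generated module over the central subalgebra Z′ generated by d^{np}, u^{np}, zⁿ. -/

import Mathlib

noncomputable section

open FreeAlgebra

/-- Defining relations of the down-up algebra `A(α, β, γ)`: the generator `ι K 0`
plays the role of `d` and `ι K 1` plays the role of `u`. -/
inductive DownUpRel (K : Type) [Field K] (α β γ : K) :
    FreeAlgebra K (Fin 2) → FreeAlgebra K (Fin 2) → Prop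
  | rel1 : DownUpRel K α β γ
      (ι K (0 : Fin 2) * ι K (0 : Fin 2) * ι K (1 : Fin 2))
      (α • (ι K (0 : Fin 2) * ι K (1 : Fin 2) * ι K (0 : Fin 2)) +
        β • (ι K (1 : Fin 2) * ι K (0 : Fin 2) * ι K (0 : Fin 2)) +
        γ • ι K (0 : Fin 2))
  | rel2 : DownUpRel K α β γ
      (ι K (0 : Fin 2) * ι K (1 : Fin 2) * ι K (1 : Fin 2))
      (α • (ι K (1 : Fin 2) * ι K (0 : Fin 2) * ι K (1 : Fin 2)) +
        β • (ι K (1 : Fin 2) * ι K (1 : Fin 2) * ι K (0 : Fin 2)) +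
        γ • ι K (1 : Fin 2))

/-- The down-up algebra `A(α, β, γ)`. -/
abbrev DownUpAlgebra (K : Type) [Field K] (α β γ : K) : Type :=
  RingQuot (DownUpRel K α β γ)

/-- The generator `d` of the down-up algebra. -/
def DownUpAlgebra.d (K : Type) [Field K] (α β γ : K) : DownUpAlgebra K α β γ :=
  RingQuot.mkAlgHom K (DownUpRel K α β γ) (ι K (0 : Fin 2))

/-- The generator `u` of the down-up algebra. -/
def DownUpAlgebra.u (K : Type) [Field K] (α β γ : K) : DownUpAlgebra K α β γ :=
  RingQuot.mkAlgHom K (DownUpRel K α β γ) (ι K (1 : Fin 2))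

/-!
With `c = γ/(r-1)`, the defining relations of `A(2r, -r², γ)` say exactly that `z` skew-commutes
with both generators, `dz = r·zd` and `zu = r·uz`, while `du = r·ud + z - c`. Hence `zⁿ` is
central, and induction gives
`d uᵐ = rᵐ uᵐ d + uᵐ⁻¹ (m rᵐ⁻¹ z - (1 + r + ⋯ + rᵐ⁻¹) c)`;
for `m = np` the three coefficients `rᵐ - 1`, `m` and `1 + ⋯ + rᵐ⁻¹` vanish in `K`, so `u^(np)`
commutes with `d`. Passing to the opposite ring exchanges `d` and `u` and fixes `z`, so `d^(np)`
commutes with `u`. The same formula shows that the monomials `uⁱ zʲ dᵏ` span `A` over `K`;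
splitting off the central factors `(u^(np))^a (zⁿ)^b (d^(np))^c` leaves those with
`i, k < np` and `j < n`.
-/

open Finset

section SkewCommute

variable {K R : Type*} [CommSemiring K] [Semiring R] [Algebra K R] {r : K} {a b : R}

theorem mul_pow_eq_smul_pow_mul (h : a * b = r • (b * a)) (j : ℕ) :
    a * b ^ j = r ^ j • (b ^ j * a) := by
  induction j with
  | zero => simp
  | succ j ih =>
    rw [pow_succ, ← mul_assoc, ih, smul_mul_assoc, mul_assoc, h, mul_smul_comm, smul_smul,
      ← mul_assoc, ← pow_succ, ← pow_succ]

theorem pow_mul_eq_smul_mul_pow (h : a * b = r • (b * a)) (j : ℕ) :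
    a ^ j * b = r ^ j • (b * a ^ j) := by
  induction j with
  | zero => simp
  | succ j ih =>
    rw [pow_succ', mul_assoc, ih, mul_smul_comm, ← mul_assoc, h, smul_mul_assoc, smul_smul,
      mul_assoc, ← pow_succ', ← pow_succ]

end SkewCommute

section Commutation

variable {K R : Type*} [Field K] [Ring R] [Algebra K R] {r c : K} {d u z : R}

theorem mul_pow_succ_eq_smul_add (hz : z = d * u - r • (u * d) + algebraMap K R c)
    (hzu : z * u = r • (u * z)) (m : ℕ) :
    d * u ^ (m + 1) = r ^ (m + 1) • (u ^ (m + 1) * d) +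
      u ^ m * (((m + 1 : K) * r ^ m) • z - algebraMap K R ((∑ i ∈ range (m + 1), r ^ i) * c)) := by
  have hdu : d * u = r • (u * d) + z - algebraMap K R c := by rw [hz]; abel
  induction m with
  | zero => simp [hdu, add_sub_assoc]
  | succ m ih =>
    calc d * u ^ (m + 2) = (d * u ^ (m + 1)) * u := by rw [pow_succ _ (m + 1), mul_assoc]
      _ = r ^ (m + 1) • (u ^ (m + 1) * (d * u)) + u ^ m * (((m + 1 : K) * r ^ m) • (z * u) -
            algebraMap K R ((∑ i ∈ range (m + 1), r ^ i) * c) * u) := by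
        rw [ih]; simp only [add_mul, sub_mul, smul_mul_assoc, mul_assoc]
      _ = _ := by
        rw [hdu, hzu]
        simp only [Algebra.algebraMap_eq_smul_one, mul_add, mul_sub, mul_smul_comm, smul_add,
          smul_sub, smul_smul, smul_mul_assoc, one_mul, mul_one, ← mul_assoc, ← pow_succ,
          sum_range_succ]
        push_cast
        match_scalars <;> ring

theorem commute_pow_of_pow_eq_one (hz : z = d * u - r • (u * d) + algebraMap K R c)
    (hzu : z * u = r • (u * z)) (hr1 : r ≠ 1) {N : ℕ} (hrN : r ^ N = 1) (hN : (N : K) = 0) :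
    Commute d (u ^ N) := by
  obtain _ | m := N
  · simp
  have hgeom : ∑ i ∈ range (m + 1), r ^ i = 0 := by simp [geom_sum_eq hr1, hrN]
  push_cast at hN
  simp [Commute, SemiconjBy, mul_pow_succ_eq_smul_add hz hzu, hrN, hN, hgeom]

theorem pow_commute_of_pow_eq_one (hz : z = d * u - r • (u * d) + algebraMap K R c)
    (hdz : d * z = r • (z * d)) (hr1 : r ≠ 1) {N : ℕ} (hrN : r ^ N = 1) (hN : (N : K) = 0) :
    Commute (d ^ N) u := by
  have hz' : MulOpposite.op z = MulOpposite.op u * MulOpposite.op d -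
      r • (MulOpposite.op d * MulOpposite.op u) + algebraMap K Rᵐᵒᵖ c := by
    simp [hz, MulOpposite.algebraMap_apply]
  have hzu' : MulOpposite.op z * MulOpposite.op d = r • (MulOpposite.op d * MulOpposite.op z) := by
    rw [← MulOpposite.op_mul, hdz, MulOpposite.op_smul, MulOpposite.op_mul]
  have h := commute_pow_of_pow_eq_one hz' hzu' hr1 hrN hN
  rw [← MulOpposite.op_pow] at h
  exact h.unop.symm

/- With `z' = du - r·ud`, the relation reads `dz' - r·z'd = γd`; adding `c = γ/(r-1)` to `z'`
contributes `(1 - r)c·d = -γd`. -/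
theorem mul_eq_smul_mul_of_d_d_u {γ : K} (hr1 : r ≠ 1)
    (hz : z = d * u - r • (u * d) + algebraMap K R (γ / (r - 1)))
    (h : d * d * u = (2 * r) • (d * u * d) + (-(r ^ 2)) • (u * d * d) + γ • d) :
    d * z = r • (z * d) := by
  have hr : r - 1 ≠ 0 := sub_ne_zero.mpr hr1
  rw [mul_assoc] at h
  simp only [hz, Algebra.algebraMap_eq_smul_one, mul_sub, sub_mul, mul_add, add_mul,
    smul_mul_assoc, mul_smul_comm, smul_sub, smul_add, smul_smul, mul_one, one_mul, mul_assoc, h]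
  match_scalars <;> field_simp <;> ring

theorem mul_eq_smul_mul_of_d_u_u {γ : K} (hr1 : r ≠ 1)
    (hz : z = d * u - r • (u * d) + algebraMap K R (γ / (r - 1)))
    (h : d * u * u = (2 * r) • (u * d * u) + (-(r ^ 2)) • (u * u * d) + γ • u) :
    z * u = r • (u * z) := by
  have hr : r - 1 ≠ 0 := sub_ne_zero.mpr hr1
  rw [mul_assoc] at h
  simp only [hz, Algebra.algebraMap_eq_smul_one, mul_sub, sub_mul, mul_add, add_mul,
    smul_mul_assoc, mul_smul_comm, smul_sub, smul_add, smul_smul, mul_one, one_mul, mul_assoc, h]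
  match_scalars <;> field_simp <;> ring

end Commutation

section Spanning

variable {K R : Type*} [CommSemiring K] [Semiring R] [Algebra K R]

theorem Submodule.span_eq_top_of_mul_mem {s T : Set R} (hs : Algebra.adjoin K s = ⊤)
    (h1 : (1 : R) ∈ span K T) (hmul : ∀ x ∈ s, ∀ y ∈ T, x * y ∈ span K T) : span K T = ⊤ := by
  have hleft : ∀ x ∈ Submonoid.closure s, ∀ y ∈ span K T, x * y ∈ span K T := by
    intro x hx
    induction hx using Submonoid.closure_induction_left with
    | one => intro y hy; rwa [one_mul]
    | mul_left x hx x' _ ih =>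
      intro y hy
      rw [mul_assoc]
      refine span_induction (p := fun y _ => x * y ∈ span K T) (hmul x hx) ?_ ?_ ?_ (ih y hy)
      · simp
      · intro a b _ _ ha hb; rw [mul_add]; exact add_mem ha hb
      · intro k a _ ha; rw [mul_smul_comm]; exact smul_mem _ k ha
  refine eq_top_iff.2 fun x _ => ?_
  have hx : x ∈ Subalgebra.toSubmodule (Algebra.adjoin K s) := by rw [hs]; trivial
  rw [Algebra.adjoin_eq_span] at hx
  exact span_le.2 (fun x hx => by simpa using hleft x hx 1 h1) hx

end Spanning

section Finiteness

variable {K R : Type*} [Field K] [Ring R] [Algebra K R] {r c : K} {d u z : R}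

theorem span_monomials_eq_top (hgen : Algebra.adjoin K {d, u} = ⊤)
    (hz : z = d * u - r • (u * d) + algebraMap K R c)
    (hdz : d * z = r • (z * d)) (hzu : z * u = r • (u * z)) :
    Submodule.span K (Set.range fun t : ℕ × ℕ × ℕ => u ^ t.1 * z ^ t.2.1 * d ^ t.2.2) = ⊤ := by
  set M := Submodule.span K (Set.range fun t : ℕ × ℕ × ℕ => u ^ t.1 * z ^ t.2.1 * d ^ t.2.2)
  have mem (i j k : ℕ) : u ^ i * z ^ j * d ^ k ∈ M := Submodule.subset_span ⟨(i, j, k), rfl⟩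
  have hd_zd (j k : ℕ) : d * (z ^ j * d ^ k) = r ^ j • (z ^ j * d ^ (k + 1)) := by
    rw [← mul_assoc, mul_pow_eq_smul_pow_mul hdz, smul_mul_assoc, mul_assoc, ← pow_succ']
  have hd : ∀ i j k, d * (u ^ i * z ^ j * d ^ k) ∈ M
    | 0, j, k => by simpa [mul_assoc, hd_zd] using M.smul_mem (r ^ j) (mem 0 j (k + 1))
    | m + 1, j, k => by
      have h : d * (u ^ (m + 1) * z ^ j * d ^ k) =
          (r ^ (m + 1) * r ^ j) • (u ^ (m + 1) * z ^ j * d ^ (k + 1)) +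
          ((m + 1 : K) * r ^ m) • (u ^ m * z ^ (j + 1) * d ^ k) -
          ((∑ i ∈ range (m + 1), r ^ i) * c) • (u ^ m * z ^ j * d ^ k) := by
        rw [mul_assoc, mul_assoc, ← mul_assoc d, mul_pow_succ_eq_smul_add hz hzu]
        simp only [add_mul, sub_mul, mul_sub, add_sub_assoc, smul_mul_assoc, mul_assoc, hd_zd,
          mul_smul_comm, smul_smul, Algebra.algebraMap_eq_smul_one, one_mul, pow_succ' z]
      rw [h]
      exact sub_mem (add_mem (M.smul_mem _ (mem _ _ _)) (M.smul_mem _ (mem _ _ _)))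
        (M.smul_mem _ (mem _ _ _))
  have hu (i j k : ℕ) : u * (u ^ i * z ^ j * d ^ k) ∈ M := by
    simpa [mul_assoc, pow_succ'] using mem (i + 1) j k
  refine Submodule.span_eq_top_of_mul_mem hgen (by simpa using mem 0 0 0) ?_
  rintro x hx _ ⟨⟨i, j, k⟩, rfl⟩
  obtain hx | hx := hx
  · rw [hx]; exact hd i j k
  · rw [Set.mem_singleton_iff.1 hx]; exact hu i j k

theorem finite_adjoin_pow_of_span_monomials
    (hspan : Submodule.span K (Set.range fun t : ℕ × ℕ × ℕ => u ^ t.1 * z ^ t.2.1 * d ^ t.2.2) = ⊤)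
    {N n : ℕ} (hN : 0 < N) (hn : 0 < n) (hdN : d ^ N ∈ Subalgebra.center K R)
    (hzn : z ^ n ∈ Subalgebra.center K R) :
    Module.Finite (Algebra.adjoin K {d ^ N, u ^ N, z ^ n}) R := by
  set B := Algebra.adjoin K ({d ^ N, u ^ N, z ^ n} : Set R)
  set S := Set.range fun t : Fin N × Fin n × Fin N => u ^ (t.1 : ℕ) * z ^ (t.2.1 : ℕ) * d ^ (t.2.2 : ℕ)
  have central (x : R) (hx : x ∈ Subalgebra.center K R) (a : ℕ) (y : R) : Commute (x ^ a) y :=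
    (Subalgebra.mem_center_iff.1 (pow_mem hx a) y).symm
  have pow_eq (x : R) (m i : ℕ) : x ^ i = (x ^ m) ^ (i / m) * x ^ (i % m) := by
    rw [← pow_mul, ← pow_add, Nat.div_add_mod]
  have hmono (i j k : ℕ) : u ^ i * z ^ j * d ^ k ∈ Submodule.span B S := by
    have hb : (u ^ N) ^ (i / N) * (z ^ n) ^ (j / n) * (d ^ N) ^ (k / N) ∈ B :=
      mul_mem (mul_mem (pow_mem (Algebra.subset_adjoin (by simp)) _)
        (pow_mem (Algebra.subset_adjoin (by simp)) _)) (pow_mem (Algebra.subset_adjoin (by simp)) _)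
    have h : u ^ i * z ^ j * d ^ k = (⟨_, hb⟩ : B) •
        (u ^ (i % N) * z ^ (j % n) * d ^ (k % N)) := by
      rw [Subalgebra.smul_def, pow_eq u N i, pow_eq z n j, pow_eq d N k]
      simp only [smul_eq_mul, mul_assoc]
      rw [(central _ hdN _ _).symm.left_comm, (central _ hzn _ _).symm.left_comm,
        (central _ hdN _ _).symm.left_comm]
    rw [h]
    exact Submodule.smul_mem _ _ (Submodule.subset_span
      ⟨(⟨i % N, Nat.mod_lt _ hN⟩, ⟨j % n, Nat.mod_lt _ hn⟩, ⟨k % N, Nat.mod_lt _ hN⟩), rfl⟩)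
  have hS : S.Finite := Set.finite_range _
  refine ⟨⟨hS.toFinset, ?_⟩⟩
  rw [hS.coe_toFinset, ← Submodule.restrictScalars_eq_top_iff K, eq_top_iff, ← hspan,
    Submodule.span_le]
  rintro _ ⟨⟨i, j, k⟩, rfl⟩
  exact hmono i j k

end Finiteness

namespace DownUpAlgebra

variable (K : Type) [Field K] (α β γ : K)

theorem d_mul_d_mul_u :
    d K α β γ * d K α β γ * u K α β γ = α • (d K α β γ * u K α β γ * d K α β γ) +
      β • (u K α β γ * d K α β γ * d K α β γ) + γ • d K α β γ := by
  have h := RingQuot.mkAlgHom_rel K (DownUpRel.rel1 (α := α) (β := β) (γ := γ))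
  simp only [map_add, map_mul, map_smul] at h
  exact h

theorem d_mul_u_mul_u :
    d K α β γ * u K α β γ * u K α β γ = α • (u K α β γ * d K α β γ * u K α β γ) +
      β • (u K α β γ * u K α β γ * d K α β γ) + γ • u K α β γ := by
  have h := RingQuot.mkAlgHom_rel K (DownUpRel.rel2 (α := α) (β := β) (γ := γ))
  simp only [map_add, map_mul, map_smul] at h
  exact h

theorem adjoin_d_u : Algebra.adjoin K {d K α β γ, u K α β γ} = ⊤ := by
  have h : Set.range (ι K : Fin 2 → FreeAlgebra K (Fin 2)) = {ι K 0, ι K 1} := by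
    ext; simp [Fin.exists_fin_two, eq_comm]
  rw [d, u, ← Set.image_pair, ← h, Algebra.adjoin_image, FreeAlgebra.adjoin_range_ι,
    Algebra.map_top, AlgHom.range_eq_top]
  exact RingQuot.mkAlgHom_surjective K _

variable {K α β γ} in
theorem mem_center_of_commute {x : DownUpAlgebra K α β γ} (hd : Commute x (d K α β γ))
    (hu : Commute x (u K α β γ)) : x ∈ Subalgebra.center K (DownUpAlgebra K α β γ) := by
  refine Subalgebra.mem_center_iff.2 fun y => (Algebra.commute_of_mem_adjoin_of_forall_mem_commute
    (R := K) (s := {d K α β γ, u K α β γ}) ?_ ?_).symm.eq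
  · rw [adjoin_d_u]; trivial
  · rintro y (rfl | rfl); exacts [hd, hu]

end DownUpAlgebra

theorem downUp_charP_finite_over_center (K : Type) [Field K] (p : ℕ) (hp : p ≠ 0)
    [CharP K p] (n : ℕ) (hn : 0 < n) (r : K) (hr : IsPrimitiveRoot r n) (hr1 : r ≠ 1)
    (γ : K) :
    DownUpAlgebra.d K (2 * r) (-(r ^ 2)) γ ^ (n * p) ∈
      Subalgebra.center K (DownUpAlgebra K (2 * r) (-(r ^ 2)) γ) ∧
    DownUpAlgebra.u K (2 * r) (-(r ^ 2)) γ ^ (n * p) ∈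
      Subalgebra.center K (DownUpAlgebra K (2 * r) (-(r ^ 2)) γ) ∧
    (DownUpAlgebra.d K (2 * r) (-(r ^ 2)) γ * DownUpAlgebra.u K (2 * r) (-(r ^ 2)) γ -
        r • (DownUpAlgebra.u K (2 * r) (-(r ^ 2)) γ * DownUpAlgebra.d K (2 * r) (-(r ^ 2)) γ) +
        algebraMap K (DownUpAlgebra K (2 * r) (-(r ^ 2)) γ) (γ / (r - 1))) ^ n ∈
      Subalgebra.center K (DownUpAlgebra K (2 * r) (-(r ^ 2)) γ) ∧
    Module.Finite
      (Algebra.adjoin K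
        ({DownUpAlgebra.d K (2 * r) (-(r ^ 2)) γ ^ (n * p),
          DownUpAlgebra.u K (2 * r) (-(r ^ 2)) γ ^ (n * p),
          (DownUpAlgebra.d K (2 * r) (-(r ^ 2)) γ * DownUpAlgebra.u K (2 * r) (-(r ^ 2)) γ -
            r • (DownUpAlgebra.u K (2 * r) (-(r ^ 2)) γ * DownUpAlgebra.d K (2 * r) (-(r ^ 2)) γ) +
            algebraMap K (DownUpAlgebra K (2 * r) (-(r ^ 2)) γ) (γ / (r - 1))) ^ n} :
          Set (DownUpAlgebra K (2 * r) (-(r ^ 2)) γ)))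
      (DownUpAlgebra K (2 * r) (-(r ^ 2)) γ) := by
  set z := DownUpAlgebra.d K (2 * r) (-(r ^ 2)) γ * DownUpAlgebra.u K (2 * r) (-(r ^ 2)) γ -
    r • (DownUpAlgebra.u K (2 * r) (-(r ^ 2)) γ * DownUpAlgebra.d K (2 * r) (-(r ^ 2)) γ) +
    algebraMap K _ (γ / (r - 1)) with hz
  have hdz := mul_eq_smul_mul_of_d_d_u hr1 hz (DownUpAlgebra.d_mul_d_mul_u ..)
  have hzu := mul_eq_smul_mul_of_d_u_u hr1 hz (DownUpAlgebra.d_mul_u_mul_u ..)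
  have hrN : r ^ (n * p) = 1 := by rw [pow_mul, hr.pow_eq_one, one_pow]
  have hNK : ((n * p : ℕ) : K) = 0 := by simp
  have hdN := DownUpAlgebra.mem_center_of_commute ((Commute.refl _).pow_left _)
    (pow_commute_of_pow_eq_one hz hdz hr1 hrN hNK)
  have huN := DownUpAlgebra.mem_center_of_commute
    (commute_pow_of_pow_eq_one hz hzu hr1 hrN hNK).symm ((Commute.refl _).pow_left _)
  have hzn : z ^ n ∈ Subalgebra.center K _ := DownUpAlgebra.mem_center_of_commute
    (by simp [Commute, SemiconjBy, mul_pow_eq_smul_pow_mul hdz, hr.pow_eq_one])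
    (by simp [Commute, SemiconjBy, pow_mul_eq_smul_mul_pow hzu, hr.pow_eq_one])
  have hspan := span_monomials_eq_top (DownUpAlgebra.adjoin_d_u ..) hz hdz hzu
  exact ⟨hdN, huN, hzn, finite_adjoin_pow_of_span_monomials hspan
    (Nat.mul_pos hn (Nat.pos_of_ne_zero hp)) hn hdN hzn⟩

end
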